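/- For the p-norm γ_p with p ≥ 2, if γ_p(z) = 1 and 0 < h < γ_p(x), then the second difference quotient satisfies (γ_p(x + hz) + γ_p(x − hz) − 2γ_p(x)) / h² ≤ 2(p − 1)/(γ_p(x) − h). -/

import Mathlib

/-!
Along the line `t ↦ x + t • z`, the `p`-norm `g t = (∑ i, |x i + t * z i| ^ p) ^ (1 / p)` is twice
differentiable wherever it is positive, and Hölder's inequality with exponents `p / (p - 2)` and
`p / 2` bounds its second derivative by `(p - 1) γ_p(z)² / g`. On `[-h, h]` the triangle inequality
gives `g ≥ γ_p(x) - h > 0`, so `g''` is bounded there by `(p - 1) / (γ_p(x) - h)`, hence by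
`M := 2 (p - 1) / (γ_p(x) - h)`. Then `g t - M t² / 2` is concave on `[-h, h]`, and comparing its
values at `±h` with its value at `0` gives `g h + g (-h) - 2 g 0 ≤ M h²`.
-/

noncomputable def pNorm {n : ℕ} (p : ℝ) (x : Fin n → ℝ) : ℝ :=
  (∑ i, |x i| ^ p) ^ (1 / p)

open Filter Topology Set

lemma hasDerivAt_abs_rpow_mul_self {q : ℝ} (hq : 0 ≤ q) (s : ℝ) :
    HasDerivAt (fun s : ℝ => |s| ^ q * s) ((q + 1) * |s| ^ q) s := by
  rcases ne_or_eq s 0 with hs | rfl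
  · have hsign := ((hasDerivAt_abs hs).rpow_const (p := q) (Or.inl (abs_ne_zero.2 hs))).mul
      (hasDerivAt_id s)
    refine hsign.congr_deriv ?_
    have habs : (SignType.sign s : ℝ) * s = |s| := sign_mul_self s
    have hpow : |s| ^ (q - 1) * |s| = |s| ^ q := by
      rw [← Real.rpow_add_one (abs_ne_zero.2 hs), sub_add_cancel]
    simp only [id]
    linear_combination (q * |s| ^ (q - 1)) * habs + q * hpow
  · rw [hasDerivAt_iff_tendsto_slope]
    have hcont : Tendsto (fun s : ℝ => |s| ^ q) (𝓝[≠] 0) (𝓝 (|0| ^ q)) :=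
      ((Real.continuousAt_rpow_const _ q (Or.inr hq)).comp continuous_abs.continuousAt).tendsto
        |>.mono_left nhdsWithin_le_nhds
    have hval : (q + 1) * |(0 : ℝ)| ^ q = |0| ^ q := by
      rcases hq.eq_or_lt with rfl | hq
      · simp
      · simp [Real.zero_rpow hq.ne']
    rw [hval]
    refine hcont.congr' ?_
    filter_upwards [self_mem_nhdsWithin] with s hs
    simp [slope_def_field, mul_div_assoc, div_self (show s ≠ 0 from hs)]

lemma Real.sum_abs_rpow_mul_sq_le {ι : Type*} (s : Finset ι) {p : ℝ} (hp : 2 ≤ p) (y z : ι → ℝ) :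
    ∑ i ∈ s, |y i| ^ (p - 2) * z i ^ 2 ≤
      (∑ i ∈ s, |y i| ^ p) ^ ((p - 2) / p) * (∑ i ∈ s, |z i| ^ p) ^ (2 / p) := by
  have hz2 : ∀ i, z i ^ 2 = |z i| ^ (2 : ℝ) := fun i => by rw [Real.rpow_two, sq_abs]
  simp_rw [hz2]
  rcases hp.eq_or_lt with rfl | hp
  · norm_num
  have hpq : (p / (p - 2)).HolderConjugate (p / 2) := by
    rw [Real.holderConjugate_iff]
    refine ⟨by rw [lt_div_iff₀ (by linarith)]; linarith, ?_⟩
    field_simp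
    ring
  have hp2 : p - 2 ≠ 0 := by linarith
  have hpow : ∀ (a : ℝ) {r r' : ℝ}, r * r' = p → (|a| ^ r) ^ r' = |a| ^ p := fun a r r' h => by
    rw [← Real.rpow_mul (abs_nonneg a), h]
  convert Real.inner_le_Lp_mul_Lq_of_nonneg s hpq (f := fun i => |y i| ^ (p - 2))
    (g := fun i => |z i| ^ (2 : ℝ)) (fun i _ => by positivity) (fun i _ => by positivity) using 3
  · exact Finset.sum_congr rfl fun i _ => (hpow _ (by field_simp)).symm
  · field_simp
  · exact Finset.sum_congr rfl fun i _ => (hpow _ (by field_simp)).symm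
  · field_simp

lemma add_neg_sub_two_mul_le_of_hasDerivAt {f f' f'' : ℝ → ℝ} {h M : ℝ} (h0 : 0 ≤ h)
    (hf : ∀ t ∈ Icc (-h) h, HasDerivAt f (f' t) t)
    (hf' : ∀ t ∈ Icc (-h) h, HasDerivAt f' (f'' t) t)
    (hM : ∀ t ∈ Icc (-h) h, f'' t ≤ M) :
    f h + f (-h) - 2 * f 0 ≤ M * h ^ 2 := by
  set φ : ℝ → ℝ := fun t => f t - M / 2 * t ^ 2
  have hφ : ∀ t ∈ Icc (-h) h, HasDerivAt φ (f' t - M * t) t := fun t ht =>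
    ((hf t ht).sub ((hasDerivAt_pow 2 t).const_mul (M / 2))).congr_deriv (by ring)
  have hφ' : ∀ t ∈ Icc (-h) h, HasDerivAt (fun t => f' t - M * t) (f'' t - M) t := fun t ht =>
    ((hf' t ht).sub ((hasDerivAt_id t).const_mul M)).congr_deriv (by simp)
  have hconc : ConcaveOn ℝ (Icc (-h) h) φ := by
    refine concaveOn_of_hasDerivWithinAt2_nonpos (convex_Icc _ _)
      (f' := fun t => f' t - M * t) (f'' := fun t => f'' t - M)
      (fun t ht => (hφ t ht).continuousAt.continuousWithinAt) ?_ ?_ ?_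
    all_goals rw [interior_Icc]
    · exact fun t ht => (hφ t (Ioo_subset_Icc_self ht)).hasDerivWithinAt
    · exact fun t ht => (hφ' t (Ioo_subset_Icc_self ht)).hasDerivWithinAt
    · exact fun t ht => sub_nonpos.2 (hM t (Ioo_subset_Icc_self ht))
  have hmid := hconc.2 (⟨by linarith, le_rfl⟩ : h ∈ Icc (-h) h)
    (⟨le_rfl, by linarith⟩ : -h ∈ Icc (-h) h) (by norm_num : (0 : ℝ) ≤ 1 / 2)
    (by norm_num : (0 : ℝ) ≤ 1 / 2) (by norm_num)
  simp only [φ, smul_eq_mul] at hmid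
  ring_nf at hmid ⊢
  linarith

lemma rpow_one_div_second_deriv_le {p F F' F'' C : ℝ} (hp : 1 ≤ p) (hF : 0 < F)
    (hF'' : F'' ≤ p * (p - 1) * (F ^ ((p - 2) / p) * C)) :
    F'' * (1 / p) * F ^ (1 / p - 1) + F' * (1 / p) * (F' * (1 / p - 1) * F ^ (1 / p - 1 - 1)) ≤
      (p - 1) * C / F ^ (1 / p) := by
  have hF'_term : F' * (1 / p) * (F' * (1 / p - 1) * F ^ (1 / p - 1 - 1)) ≤ 0 := by
    have hp1 : 1 / p - 1 ≤ 0 := by rw [sub_nonpos, div_le_one (by positivity)]; exact hp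
    have := mul_nonpos_of_nonneg_of_nonpos (sq_nonneg F')
      (mul_nonpos_of_nonneg_of_nonpos (by positivity : 0 ≤ 1 / p * F ^ (1 / p - 1 - 1)) hp1)
    linarith
  have hexp : F ^ ((p - 2) / p) * F ^ (1 / p - 1) = (F ^ (1 / p))⁻¹ := by
    rw [← Real.rpow_add hF, ← Real.rpow_neg hF.le]
    congr 1
    field_simp
    ring
  calc _ ≤ F'' * (1 / p) * F ^ (1 / p - 1) := by linarith
    _ ≤ p * (p - 1) * (F ^ ((p - 2) / p) * C) * (1 / p) * F ^ (1 / p - 1) := by gcongr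
    _ = (p - 1) * C / F ^ (1 / p) := by
      rw [div_eq_mul_inv ((p - 1) * C), ← hexp]
      field_simp

section pNorm

variable {n : ℕ} {p : ℝ}

lemma pNorm_rpow (hp : p ≠ 0) (y : Fin n → ℝ) : pNorm p y ^ p = ∑ i, |y i| ^ p := by
  rw [pNorm, one_div, Real.rpow_inv_rpow (by positivity) hp]

lemma pNorm_add_le (hp : 1 ≤ p) (a b : Fin n → ℝ) : pNorm p (a + b) ≤ pNorm p a + pNorm p b := by
  simpa [pNorm] using Real.Lp_add_le Finset.univ a b hp

lemma pNorm_smul (hp : p ≠ 0) (c : ℝ) (z : Fin n → ℝ) : pNorm p (c • z) = |c| * pNorm p z := by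
  simp only [pNorm, Pi.smul_apply, smul_eq_mul, abs_mul,
    Real.mul_rpow (abs_nonneg c) (abs_nonneg _), ← Finset.mul_sum]
  rw [Real.mul_rpow (by positivity) (by positivity), one_div, Real.rpow_rpow_inv (abs_nonneg c) hp]

lemma pNorm_sub_abs_mul_le_pNorm_add_smul (hp : 1 ≤ p) (x z : Fin n → ℝ) (t : ℝ) :
    pNorm p x - |t| * pNorm p z ≤ pNorm p (x + t • z) := by
  have := pNorm_add_le hp (x + t • z) ((-t) • z)
  rw [pNorm_smul (by linarith), abs_neg, add_assoc, ← add_smul, add_neg_cancel, zero_smul,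
    add_zero] at this
  linarith

lemma exists_hasDerivAt2_pNorm_add_smul_le (hp : 2 ≤ p) (x z : Fin n → ℝ) :
    ∃ g' g'' : ℝ → ℝ, ∀ t, 0 < pNorm p (x + t • z) →
      HasDerivAt (fun t => pNorm p (x + t • z)) (g' t) t ∧ HasDerivAt g' (g'' t) t ∧
        g'' t ≤ (p - 1) * pNorm p z ^ 2 / pNorm p (x + t • z) := by
  have hp0 : p ≠ 0 := by positivity
  set Φ : ℝ → ℝ := fun t => ∑ i, |(x + t • z) i| ^ p
  set Φ' : ℝ → ℝ := fun t => ∑ i, p * (|(x + t • z) i| ^ (p - 2) * (x + t • z) i) * z i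
  set Φ'' : ℝ → ℝ := fun t => ∑ i, p * ((p - 2 + 1) * |(x + t • z) i| ^ (p - 2)) * z i * z i
  have hline : ∀ i t, HasDerivAt (fun t : ℝ => (x + t • z) i) (z i) t := fun i t => by
    simpa using ((hasDerivAt_id t).mul_const (z i)).const_add (x i)
  have hΦ : ∀ t, HasDerivAt Φ (Φ' t) t := fun t =>
    HasDerivAt.fun_sum fun i _ =>
      ((hasDerivAt_abs_rpow _ (by linarith)).comp t (hline i t)).congr_deriv (by ring)
  have hΦ' : ∀ t, HasDerivAt Φ' (Φ'' t) t := fun t =>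
    HasDerivAt.fun_sum fun i _ =>
      ((((hasDerivAt_abs_rpow_mul_self (by linarith) _).const_mul p).comp t (hline i t)).mul_const
        (z i))
  have hΦ''_le : ∀ t, Φ'' t ≤ p * (p - 1) * (Φ t ^ ((p - 2) / p) * pNorm p z ^ 2) := fun t => by
    have hΦ''_eq : Φ'' t = p * (p - 1) * ∑ i, |(x + t • z) i| ^ (p - 2) * z i ^ 2 := by
      simp only [Φ'', Finset.mul_sum]
      exact Finset.sum_congr rfl fun i _ => by ring
    rw [hΦ''_eq, pNorm, ← Real.rpow_mul_natCast (by positivity), one_div_mul_eq_div]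
    gcongr
    · nlinarith
    · exact Real.sum_abs_rpow_mul_sq_le _ hp _ _
  refine ⟨fun t => Φ' t * (1 / p) * Φ t ^ (1 / p - 1),
    fun t => Φ'' t * (1 / p) * Φ t ^ (1 / p - 1) +
      Φ' t * (1 / p) * (Φ' t * (1 / p - 1) * Φ t ^ (1 / p - 1 - 1)), fun t ht => ?_⟩
  have hΦpos : 0 < Φ t := (pNorm_rpow hp0 (x + t • z)).symm.trans_gt (by positivity)
  refine ⟨(hΦ t).rpow_const (Or.inl hΦpos.ne'),
    ((hΦ' t).mul_const _).mul ((hΦ t).rpow_const (Or.inl hΦpos.ne')), ?_⟩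
  exact rpow_one_div_second_deriv_le (by linarith) hΦpos (hΦ''_le t)

end pNorm

/-- For `p ≥ 2`, a `p`-unit vector `z` and `0 < h < γ_p(x)`, the second difference quotient of
the `p`-norm is bounded by `2(p−1)/(γ_p(x) − h)`. -/
theorem second_diff_quotient_pNorm_le {n : ℕ} (p : ℝ) (hp : 2 ≤ p)
    (x z : Fin n → ℝ) (hz : pNorm p z = 1) (h : ℝ) (h0 : 0 < h) (hh : h < pNorm p x) :
    (pNorm p (x + h • z) + pNorm p (x - h • z) - 2 * pNorm p x) / h ^ 2 ≤
      2 * (p - 1) / (pNorm p x - h) := by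
  obtain ⟨g', g'', hg⟩ := exists_hasDerivAt2_pNorm_add_smul_le hp x z
  have hlower : ∀ t ∈ Icc (-h) h, pNorm p x - h ≤ pNorm p (x + t • z) := fun t ht => by
    have := pNorm_sub_abs_mul_le_pNorm_add_smul (p := p) (by linarith) x z t
    rw [hz, mul_one] at this
    linarith [abs_le.2 ⟨ht.1, ht.2⟩]
  have hpos : ∀ t ∈ Icc (-h) h, 0 < pNorm p (x + t • z) := fun t ht =>
    (sub_pos.2 hh).trans_le (hlower t ht)
  have hsecond : ∀ t ∈ Icc (-h) h, g'' t ≤ 2 * (p - 1) / (pNorm p x - h) := fun t ht =>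
    calc g'' t ≤ (p - 1) * pNorm p z ^ 2 / pNorm p (x + t • z) := (hg t (hpos t ht)).2.2
      _ ≤ 2 * (p - 1) / (pNorm p x - h) := by
        rw [hz, one_pow, mul_one]
        exact div_le_div₀ (by linarith) (by linarith) (sub_pos.2 hh) (hlower t ht)
  have key := add_neg_sub_two_mul_le_of_hasDerivAt h0.le (fun t ht => (hg t (hpos t ht)).1)
    (fun t ht => (hg t (hpos t ht)).2.1) hsecond
  rw [div_le_iff₀ (by positivity)]
  simpa [neg_smul, ← sub_eq_add_neg] using key
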